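/- arXiv:2502.15729 — 2 statements merged into one kernel-verified Lean document; each statement's English description precedes it below -/
import Mathlib

section
/- Every track in the boundary tetrahedron T is a simple closed curve: if P is a nonempty connected pattern in T, then P (with the subspace topology from ℝ³) is homeomorphic to the circle S¹ (the unit sphere in EuclideanSpace ℝ (Fin 2)). -/
open Set

noncomputable section

/-- Abbreviation for Euclidean 3-space. -/
abbrev E3 := EuclideanSpace ℝ (Fin 3)

/-- The closed 2-dimensional face of the tetrahedron opposite the vertex `v i`:
the convex hull of the other three vertices. -/
def TetFace (v : Fin 4 → E3) (i : Fin 4) : Set E3 :=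
  convexHull ℝ (v '' {j | j ≠ i})

/-- The boundary tetrahedron `T`: the union of the four closed 2-dimensional faces. -/
def Tet (v : Fin 4 → E3) : Set E3 := ⋃ i, TetFace v i

/-- The union of the (closed) edges of the tetrahedron. -/
def TetEdges (v : Fin 4 → E3) : Set E3 :=
  ⋃ (i : Fin 4) (j : Fin 4) (_ : i ≠ j), segment ℝ (v i) (v j)

/-- The pair of endpoints `p = (p.1, p.2)` of a straight line segment inside the face opposite
vertex `i` joins two *distinct* edges of that face: `p.1` lies in the relative interior
(open segment) of one edge of the face and `p.2` in the relative interior of a different edge. -/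
def JoinsDistinctEdges (v : Fin 4 → E3) (i : Fin 4) (p : E3 × E3) : Prop :=
  ∃ j k l m : Fin 4, j ≠ i ∧ k ≠ i ∧ l ≠ i ∧ m ≠ i ∧ j ≠ k ∧ l ≠ m ∧
    ({j, k} : Finset (Fin 4)) ≠ ({l, m} : Finset (Fin 4)) ∧
    p.1 ∈ openSegment ℝ (v j) (v k) ∧ p.2 ∈ openSegment ℝ (v l) (v m)

/-- A pattern in the boundary tetrahedron `T` determined by the vertices `v`. -/
def IsPattern (v : Fin 4 → E3) (P : Set E3) : Prop :=
  P ⊆ Tet v ∧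
  -- (i) on each face the pattern is a finite disjoint union of closed straight segments,
  -- each joining the relative interiors of two distinct edges of that face
  (∀ i : Fin 4, ∃ L : Finset (E3 × E3),
    (P ∩ TetFace v i = ⋃ p ∈ L, segment ℝ p.1 p.2) ∧
    (∀ p ∈ L, JoinsDistinctEdges v i p) ∧
    (∀ p ∈ L, ∀ q ∈ L, p ≠ q → Disjoint (segment ℝ p.1 p.2) (segment ℝ q.1 q.2))) ∧
  -- (ii) the intersection with each edge is a finite subset of its relative interior
  (∀ i j : Fin 4, i ≠ j →
    (P ∩ segment ℝ (v i) (v j)).Finite ∧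
    P ∩ segment ℝ (v i) (v j) ⊆ openSegment ℝ (v i) (v j))

/-- A track is a nonempty connected pattern. -/
def IsTrack (v : Fin 4 → E3) (P : Set E3) : Prop :=
  IsPattern v P ∧ P.Nonempty ∧ IsPreconnected P

/-- The weight of a track: the number of points of intersection with the edges of `T`. -/
def trackWeight (v : Fin 4 → E3) (P : Set E3) : ℕ :=
  (P ∩ TetEdges v).ncard

/-!
Each face meets a pattern in disjoint segments whose endpoints lie on open edges. Barycentric
coordinates show that the interior of such a segment meets no other face, while an endpoint on the
open edge `[v a, v c]` lies on exactly one face besides its own, namely the face opposite the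
fourth vertex, and hence on exactly one other segment. So the segments form a finite family in
which segments meet only at common endpoints and every endpoint is shared by exactly two segments.
Crossing from a segment to the other segment at its forward endpoint is a permutation of the
oriented segments that conjugates to its inverse under reversal of orientation, so an orbit never
meets its own reversal; by connectedness a single orbit of some length `m ≥ 2` exhausts the
segments. Interpolating its vertices affinely gives a continuous bijection from `ℝ ⧸ mℤ` onto the
track, which is a homeomorphism because the circle is compact and `ℝ³` Hausdorff.
-/

section Polygon

variable {E : Type*} [AddCommGroup E] [Module ℝ E]

def polygonMap (z : ℤ → E) (t : ℝ) : E :=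
  AffineMap.lineMap (z ⌊t⌋) (z (⌊t⌋ + 1)) (Int.fract t)

variable (z : ℤ → E)

theorem polygonMap_intCast (n : ℤ) : polygonMap z n = z n := by
  simp [polygonMap]

theorem polygonMap_eqOn_Icc (n : ℤ) :
    EqOn (polygonMap z) (fun t => AffineMap.lineMap (z n) (z (n + 1)) (t - n)) (Icc n (n + 1)) := by
  intro t ⟨hnt, htn⟩
  rcases htn.lt_or_eq with htn | rfl
  · have hfloor : ⌊t⌋ = n := Int.floor_eq_iff.mpr ⟨hnt, htn⟩
    simp [polygonMap, Int.fract, hfloor]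
  · simpa using polygonMap_intCast z (n + 1)

theorem polygonMap_mem_segment (t : ℝ) :
    polygonMap z t ∈ segment ℝ (z ⌊t⌋) (z (⌊t⌋ + 1)) := by
  rw [segment_eq_image_lineMap]
  exact ⟨_, ⟨Int.fract_nonneg t, (Int.fract_lt_one t).le⟩, rfl⟩

theorem polygonMap_mem_openSegment {t : ℝ} (ht : Int.fract t ≠ 0) :
    polygonMap z t ∈ openSegment ℝ (z ⌊t⌋) (z (⌊t⌋ + 1)) := by
  rw [openSegment_eq_image_lineMap]
  exact ⟨_, ⟨(Int.fract_nonneg t).lt_of_ne' ht, Int.fract_lt_one t⟩, rfl⟩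

theorem range_polygonMap : range (polygonMap z) = ⋃ n : ℤ, segment ℝ (z n) (z (n + 1)) := by
  refine Subset.antisymm
    (range_subset_iff.mpr fun t => mem_iUnion.mpr ⟨_, polygonMap_mem_segment z t⟩) ?_
  refine iUnion_subset fun n => ?_
  rw [segment_eq_image_lineMap]
  rintro _ ⟨θ, hθ, rfl⟩
  refine ⟨n + θ, ?_⟩
  rw [polygonMap_eqOn_Icc z n ⟨by linarith [hθ.1], by linarith [hθ.2]⟩]
  simp

theorem polygonMap_add_natCast {m : ℕ} (hz : ∀ n, z (n + m) = z n) (t : ℝ) :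
    polygonMap z (t + m) = polygonMap z t := by
  simp only [polygonMap, Int.floor_add_natCast, Int.fract_add_natCast, hz,
    add_right_comm _ (m : ℤ) 1]

variable {z}

theorem exists_zsmul_eq_sub_of_polygonMap_eq {m : ℕ} (hm : m ≠ 1)
    (hz : ∀ a b, z a = z b ↔ (m : ℤ) ∣ a - b)
    (hopen : ∀ a b, ∀ x ∈ openSegment ℝ (z a) (z (a + 1)),
      x ∈ segment ℝ (z b) (z (b + 1)) → (m : ℤ) ∣ a - b)
    {s t : ℝ} (h : polygonMap z s = polygonMap z t) : ∃ k : ℤ, k • (m : ℝ) = s - t := by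
  have hfloor : (m : ℤ) ∣ ⌊s⌋ - ⌊t⌋ := by
    by_cases hs : Int.fract s = 0
    · by_cases ht : Int.fract t = 0
      · simpa [← hz, polygonMap, hs, ht] using h
      · exact dvd_sub_comm.mp
          (hopen _ _ _ (polygonMap_mem_openSegment z ht) (h ▸ polygonMap_mem_segment z s))
    · exact hopen _ _ _ (polygonMap_mem_openSegment z hs) (h ▸ polygonMap_mem_segment z t)
  have hne : z ⌊t⌋ ≠ z (⌊t⌋ + 1) := by
    rw [Ne, hz, sub_add_cancel_left, dvd_neg, Int.natCast_dvd_ofNat, Nat.dvd_one]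
    exact hm
  have hfract : Int.fract s = Int.fract t := by
    refine AffineMap.lineMap_injective ℝ hne ?_
    have hsucc : (m : ℤ) ∣ (⌊s⌋ + 1) - (⌊t⌋ + 1) := by simpa using hfloor
    simpa [polygonMap, (hz _ _).mpr hfloor, (hz _ _).mpr hsucc] using h
  obtain ⟨k, hk⟩ := hfloor
  refine ⟨k, ?_⟩
  rw [← Int.floor_add_fract s, ← Int.floor_add_fract t, hfract, zsmul_eq_mul]
  have hk' : ((⌊s⌋ - ⌊t⌋ : ℤ) : ℝ) = (m * k : ℤ) := congrArg _ hk
  push_cast at hk'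
  linarith

variable [TopologicalSpace E] [IsTopologicalAddGroup E] [ContinuousSMul ℝ E]

theorem isCompact_segment (x y : E) : IsCompact (segment ℝ x y) := by
  rw [segment_eq_image_lineMap]
  exact isCompact_Icc.image AffineMap.lineMap_continuous

variable (z) in
theorem continuous_polygonMap : Continuous (polygonMap z) := by
  have hpiece (n : ℤ) : ContinuousOn (polygonMap z) (Icc n (n + 1)) :=
    ContinuousOn.congr (by fun_prop) (polygonMap_eqOn_Icc z n)
  refine continuous_iff_continuousAt.mpr fun t => ?_
  have hround := abs_le.mp (abs_sub_round t)
  have hcont : ContinuousOn (polygonMap z) (Icc (round t - 1 : ℤ) (round t + 1 : ℤ)) := by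
    rw [← Icc_union_Icc_eq_Icc (b := (round t : ℝ)) (by push_cast; linarith)
      (by push_cast; linarith)]
    have h1 := hpiece (round t - 1)
    have h2 := hpiece (round t)
    push_cast at h1 h2 ⊢
    rw [sub_add_cancel] at h1
    exact h1.union_of_isClosed h2 isClosed_Icc isClosed_Icc
  exact hcont.continuousAt (Icc_mem_nhds (by push_cast; linarith) (by push_cast; linarith))

theorem nonempty_addCircle_homeomorph_iUnion_segment [T2Space E] {m : ℕ} (hm : 1 < m)
    (hz : ∀ a b, z a = z b ↔ (m : ℤ) ∣ a - b)
    (hopen : ∀ a b, ∀ x ∈ openSegment ℝ (z a) (z (a + 1)),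
      x ∈ segment ℝ (z b) (z (b + 1)) → (m : ℤ) ∣ a - b) :
    Nonempty (AddCircle (m : ℝ) ≃ₜ ⋃ n : ℤ, segment ℝ (z n) (z (n + 1))) := by
  have hper : Function.Periodic (polygonMap z) m :=
    polygonMap_add_natCast z fun n => (hz _ _).mpr (by simp)
  have hcont : Continuous hper.lift :=
    (QuotientAddGroup.isQuotientMap_mk _).continuous_iff.mpr (continuous_polygonMap z)
  have hinj : Function.Injective hper.lift := by
    intro x y
    induction x using QuotientAddGroup.induction_on
    induction y using QuotientAddGroup.induction_on
    intro h
    rw [QuotientAddGroup.eq_iff_sub_mem, AddSubgroup.mem_zmultiples_iff]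
    exact exists_zsmul_eq_sub_of_polygonMap_eq hm.ne' hz hopen h
  have hrange : range hper.lift = ⋃ n : ℤ, segment ℝ (z n) (z (n + 1)) := by
    rw [← range_polygonMap, ← QuotientAddGroup.mk_surjective.range_comp]
    rfl
  have : Fact (0 < (m : ℝ)) := ⟨by positivity⟩
  exact ⟨(hcont.isClosedEmbedding hinj).isEmbedding.toHomeomorph.trans (.setCongr hrange)⟩

end Polygon

theorem eq_univ_of_isPreconnected_iUnion {X ι : Type*} [TopologicalSpace X] [Finite ι]
    {K : ι → Set X} (hK : ∀ i, IsClosed (K i)) (hne : ∀ i, (K i).Nonempty)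
    (hconn : IsPreconnected (⋃ i, K i)) {C : Set ι} (hC : C.Nonempty)
    (hadj : ∀ i ∈ C, ∀ j, (K i ∩ K j).Nonempty → j ∈ C) : C = univ := by
  have hdisj : ∀ i ∈ C, ∀ j ∉ C, ∀ x ∈ K i, x ∉ K j := fun i hi j hj x hxi hxj =>
    hj (hadj i hi j ⟨x, hxi, hxj⟩)
  have hcover : (⋃ i, K i) ⊆ (⋃ i ∈ C, K i) ∪ ⋃ j ∈ Cᶜ, K j := by
    rw [← biUnion_union, union_compl_self, biUnion_univ]
  have hsplit := isPreconnected_iff_subset_of_disjoint_closed.mp hconn _ _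
    ((toFinite C).isClosed_biUnion fun i _ => hK i)
    ((toFinite Cᶜ).isClosed_biUnion fun i _ => hK i)
    hcover (by
      ext x
      simp only [mem_inter_iff, mem_iUnion, mem_compl_iff, mem_empty_iff_false, iff_false]
      rintro ⟨-, ⟨i, hi, hxi⟩, ⟨j, hj, hxj⟩⟩
      exact hdisj i hi j hj x hxi hxj)
  refine eq_univ_of_forall fun j => by_contra fun hj => ?_
  obtain ⟨i, hi⟩ := hC
  rcases hsplit with h | h
  · obtain ⟨x, hx⟩ := hne j
    obtain ⟨i', hi', hxi'⟩ := mem_iUnion₂.mp (h (mem_iUnion_of_mem j hx))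
    exact hdisj i' hi' j hj x hxi' hx
  · obtain ⟨x, hx⟩ := hne i
    obtain ⟨j', hj', hxj'⟩ := mem_iUnion₂.mp (h (mem_iUnion_of_mem i hx))
    exact hdisj i hi j' hj' x hx hxj'

structure PolygonalLoops (ι E : Type*) [AddCommGroup E] [Module ℝ E] where
  endpt : ι → Bool → E
  endpt_false_ne_true : ∀ i, endpt i false ≠ endpt i true
  mem_range_endpt_of_mem_of_ne : ∀ {i j x}, i ≠ j →
    x ∈ segment ℝ (endpt i false) (endpt i true) →
    x ∈ segment ℝ (endpt j false) (endpt j true) → x ∈ range (endpt i)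
  existsUnique_partner : ∀ i b,
    ∃! j, j ≠ i ∧ endpt i b ∈ segment ℝ (endpt j false) (endpt j true)

namespace PolygonalLoops

variable {ι E : Type*} [AddCommGroup E] [Module ℝ E] (S : PolygonalLoops ι E)

def seg (i : ι) : Set E := segment ℝ (S.endpt i false) (S.endpt i true)

theorem endpt_not_ne (i : ι) (b : Bool) : S.endpt i (!b) ≠ S.endpt i b := by
  cases b
  exacts [(S.endpt_false_ne_true i).symm, S.endpt_false_ne_true i]

theorem seg_eq_segment (i : ι) (b : Bool) :
    S.seg i = segment ℝ (S.endpt i (!b)) (S.endpt i b) := by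
  cases b
  exacts [segment_symm ℝ _ _, rfl]

theorem endpt_mem_seg (i : ι) (b : Bool) : S.endpt i b ∈ S.seg i := by
  rw [S.seg_eq_segment i b]
  exact right_mem_segment ℝ _ _

theorem eq_of_mem_openSegment_of_mem_seg {i j : ι} {b : Bool} {x : E}
    (hx : x ∈ openSegment ℝ (S.endpt i (!b)) (S.endpt i b)) (hj : x ∈ S.seg j) : j = i := by
  by_contra hji
  have hxi : x ∈ S.seg i := S.seg_eq_segment i b ▸ openSegment_subset_segment ℝ _ _ hx
  obtain ⟨c, rfl⟩ := S.mem_range_endpt_of_mem_of_ne (Ne.symm hji) hxi hj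
  have hc : c = !b ∨ c = b := by cases b <;> cases c <;> simp
  rcases hc with rfl | rfl
  · exact S.endpt_not_ne i b (left_mem_openSegment_iff.mp hx)
  · exact S.endpt_not_ne i c (right_mem_openSegment_iff.mp hx)

def partner (i : ι) (b : Bool) : ι := (S.existsUnique_partner i b).exists.choose

theorem partner_ne (i : ι) (b : Bool) : S.partner i b ≠ i :=
  (S.existsUnique_partner i b).exists.choose_spec.1

theorem endpt_mem_seg_partner (i : ι) (b : Bool) : S.endpt i b ∈ S.seg (S.partner i b) :=
  (S.existsUnique_partner i b).exists.choose_spec.2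

theorem eq_partner {i j : ι} {b : Bool} (hj : j ≠ i) (h : S.endpt i b ∈ S.seg j) :
    j = S.partner i b :=
  (S.existsUnique_partner i b).unique ⟨hj, h⟩
    ⟨S.partner_ne i b, S.endpt_mem_seg_partner i b⟩

-- A dart `(i, b)` is segment `i` traversed towards its endpoint `S.endpt i b`; `next` crosses
-- to the other segment at that endpoint and traverses it away from it.
open scoped Classical in
def next (d : ι × Bool) : ι × Bool :=
  (S.partner d.1 d.2, decide (S.endpt (S.partner d.1 d.2) false = S.endpt d.1 d.2))

theorem endpt_next (d : ι × Bool) : S.endpt (S.next d).1 (!(S.next d).2) = S.endpt d.1 d.2 := by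
  obtain ⟨c, hc⟩ := S.mem_range_endpt_of_mem_of_ne (S.partner_ne d.1 d.2)
    (S.endpt_mem_seg_partner d.1 d.2) (S.endpt_mem_seg d.1 d.2)
  by_cases h : S.endpt (S.partner d.1 d.2) false = S.endpt d.1 d.2
  · simp [next, h]
  · cases c
    · exact absurd hc h
    · simpa [next, h]

def reverse : Equiv.Perm (ι × Bool) := (Equiv.refl ι).prodCongr Equiv.boolNot

theorem reverse_apply (d : ι × Bool) : reverse d = (d.1, !d.2) := rfl

@[simp]
theorem reverse_reverse (d : ι × Bool) : reverse (reverse d) = d := by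
  rw [reverse_apply, reverse_apply, Bool.not_not]

theorem reverse_inv : (reverse⁻¹ : Equiv.Perm (ι × Bool)) = reverse :=
  inv_eq_of_mul_eq_one_left (Equiv.ext reverse_reverse)

theorem next_reverse_next (d : ι × Bool) : S.next (reverse (S.next d)) = reverse d := by
  have hback := S.endpt_next d
  have hpartner : S.partner (S.next d).1 (!(S.next d).2) = d.1 :=
    (S.eq_partner (S.partner_ne d.1 d.2).symm (hback ▸ S.endpt_mem_seg d.1 d.2)).symm
  change S.next ((S.next d).1, !(S.next d).2) = (d.1, !d.2)
  generalize S.next d = d' at hback hpartner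
  obtain ⟨i, b⟩ := d
  cases b <;> simp [next, hpartner, hback, S.endpt_false_ne_true]

def nextPerm : Equiv.Perm (ι × Bool) where
  toFun := S.next
  invFun d := reverse (S.next (reverse d))
  left_inv d := by simp [S.next_reverse_next]
  right_inv d := by simpa using S.next_reverse_next (reverse d)

theorem reverse_mul_nextPerm_zpow (n : ℤ) :
    reverse * S.nextPerm ^ n = S.nextPerm ^ (-n) * reverse := by
  have hconj : reverse * S.nextPerm * reverse⁻¹ = S.nextPerm⁻¹ := by
    refine eq_inv_of_mul_eq_one_left (Equiv.ext fun d => ?_)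
    simpa [reverse_inv, nextPerm] using congrArg reverse (S.next_reverse_next d)
  calc reverse * S.nextPerm ^ n = (reverse * S.nextPerm * reverse⁻¹) ^ n * reverse := by
        rw [conj_zpow, inv_mul_cancel_right]
    _ = S.nextPerm ^ (-n) * reverse := by rw [hconj, inv_zpow']

section Walk

variable (d₀ : ι × Bool)

def walk (n : ℤ) : ι × Bool := (S.nextPerm ^ n) d₀

def period : ℕ := MulAction.period S.nextPerm d₀

theorem walk_add_one (n : ℤ) : S.walk d₀ (n + 1) = S.next (S.walk d₀ n) := by
  rw [walk, add_comm, zpow_add, zpow_one, Equiv.Perm.mul_apply]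
  rfl

theorem walk_eq_walk_iff {a b : ℤ} :
    S.walk d₀ a = S.walk d₀ b ↔ (S.period d₀ : ℤ) ∣ a - b := by
  rw [period, ← MulAction.zpow_smul_eq_iff_period_dvd, Equiv.Perm.smul_def,
    ← (S.nextPerm ^ (-b)).injective.eq_iff, walk, walk, ← Equiv.Perm.mul_apply, ← zpow_add,
    ← Equiv.Perm.mul_apply, ← zpow_add, neg_add_cancel, zpow_zero, neg_add_eq_sub]
  rfl

theorem reverse_walk (n : ℤ) : reverse (S.walk d₀ n) = (S.nextPerm ^ (-n)) (reverse d₀) := by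
  rw [walk, ← Equiv.Perm.mul_apply, S.reverse_mul_nextPerm_zpow, Equiv.Perm.mul_apply]

-- A reversal would make `reverse d₀` a point of the orbit, and then the middle dart `d` of the
-- orbit segment from `d₀` to `reverse d₀` satisfies `reverse d = d` or `reverse d = next d`.
theorem walk_ne_reverse_walk (a b : ℤ) : S.walk d₀ a ≠ reverse (S.walk d₀ b) := by
  intro h
  have hd₀ : reverse d₀ = S.walk d₀ (b + a) := by
    rw [S.reverse_walk, walk, ← (S.nextPerm ^ b).injective.eq_iff, ← Equiv.Perm.mul_apply,
      ← Equiv.Perm.mul_apply, ← zpow_add, ← zpow_add, add_neg_cancel, zpow_zero] at h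
    exact h.symm
  have hk (k : ℤ) : reverse (S.walk d₀ k) = S.walk d₀ (b + a - k) := by
    rw [S.reverse_walk, hd₀, walk, walk, ← Equiv.Perm.mul_apply, ← zpow_add, neg_add_eq_sub]
  obtain ⟨k, hba | hba⟩ := Int.even_or_odd' (b + a)
  · have hsnd := congrArg Prod.snd (hk k)
    rw [hba, two_mul, add_sub_cancel_right, reverse_apply] at hsnd
    exact Bool.not_ne_self _ hsnd
  · have hfst := congrArg Prod.fst (hk k)
    rw [hba, show 2 * k + 1 - k = k + 1 by ring, S.walk_add_one, reverse_apply] at hfst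
    exact S.partner_ne _ _ hfst.symm

def segAt (n : ℤ) : ι := (S.walk d₀ n).1

def vertex (n : ℤ) : E := S.endpt (S.walk d₀ n).1 (S.walk d₀ n).2

theorem segAt_eq_segAt_iff {a b : ℤ} :
    S.segAt d₀ a = S.segAt d₀ b ↔ (S.period d₀ : ℤ) ∣ a - b := by
  rw [← S.walk_eq_walk_iff]
  refine ⟨fun h => by_contra fun hne => S.walk_ne_reverse_walk d₀ a b (Prod.ext h ?_),
    congrArg Prod.fst⟩
  exact Bool.eq_not_of_ne fun h' => hne (Prod.ext h h')

theorem endpt_segAt_succ (n : ℤ) :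
    S.endpt (S.segAt d₀ (n + 1)) (!(S.walk d₀ (n + 1)).2) = S.vertex d₀ n := by
  rw [segAt, S.walk_add_one]
  exact S.endpt_next _

theorem seg_segAt_succ (n : ℤ) :
    S.seg (S.segAt d₀ (n + 1)) = segment ℝ (S.vertex d₀ n) (S.vertex d₀ (n + 1)) := by
  rw [S.seg_eq_segment _ (S.walk d₀ (n + 1)).2, S.endpt_segAt_succ]
  rfl

theorem vertex_ne_vertex_succ (n : ℤ) : S.vertex d₀ n ≠ S.vertex d₀ (n + 1) := by
  rw [← S.endpt_segAt_succ]
  exact S.endpt_not_ne _ _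

theorem exists_segAt_eq_partner (n : ℤ) (b : Bool) :
    ∃ k, S.segAt d₀ k = S.partner (S.segAt d₀ n) b := by
  by_cases hb : b = (S.walk d₀ n).2
  · exact ⟨n + 1, by rw [segAt, S.walk_add_one, hb]; rfl⟩
  · have hprev := congrArg Prod.fst (S.next_reverse_next (S.walk d₀ (n - 1)))
    rw [← S.walk_add_one, sub_add_cancel, reverse_apply, reverse_apply] at hprev
    exact ⟨n - 1, by rw [segAt, ← hprev, Bool.eq_not_of_ne hb]; rfl⟩

theorem vertex_eq_vertex_iff {a b : ℤ} :
    S.vertex d₀ a = S.vertex d₀ b ↔ (S.period d₀ : ℤ) ∣ a - b := by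
  refine ⟨fun h => ?_, fun h => by rw [vertex, vertex, (S.walk_eq_walk_iff d₀).mpr h]⟩
  by_cases hab : S.segAt d₀ b = S.segAt d₀ a
  · exact dvd_sub_comm.mp ((S.segAt_eq_segAt_iff d₀).mp hab)
  · -- `segAt b` contains the forward endpoint of `segAt a`, so it is `segAt (a + 1)`
    have hmem : S.endpt (S.segAt d₀ a) (S.walk d₀ a).2 ∈ S.seg (S.segAt d₀ b) := by
      change S.vertex d₀ a ∈ _
      rw [h]
      exact S.endpt_mem_seg _ _
    have hsucc : S.segAt d₀ b = S.segAt d₀ (a + 1) := by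
      rw [S.eq_partner hab hmem]
      exact congrArg Prod.fst (S.walk_add_one d₀ a).symm
    have hwalk := (S.walk_eq_walk_iff d₀).mpr ((S.segAt_eq_segAt_iff d₀).mp hsucc)
    exact (S.vertex_ne_vertex_succ d₀ a (h.trans (by rw [vertex, vertex, hwalk]))).elim

theorem dvd_of_mem_openSegment_vertex {a b : ℤ} {x : E}
    (hxa : x ∈ openSegment ℝ (S.vertex d₀ a) (S.vertex d₀ (a + 1)))
    (hxb : x ∈ segment ℝ (S.vertex d₀ b) (S.vertex d₀ (b + 1))) :
    (S.period d₀ : ℤ) ∣ a - b := by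
  rw [← S.seg_segAt_succ] at hxb
  rw [← S.endpt_segAt_succ] at hxa
  have h := (S.segAt_eq_segAt_iff d₀).mp (S.eq_of_mem_openSegment_of_mem_seg hxa hxb)
  simpa using dvd_sub_comm.mp h

theorem one_lt_period [Finite ι] : 1 < S.period d₀ := by
  have hpos : 0 < S.period d₀ := MulAction.period_pos_of_orderOf_pos (orderOf_pos _) d₀
  refine lt_of_le_of_ne hpos fun h => S.partner_ne (S.segAt d₀ 0) (S.walk d₀ 0).2 ?_
  have h10 := (S.segAt_eq_segAt_iff d₀ (a := 0 + 1) (b := 0)).mpr (by simp [← h])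
  rwa [segAt, S.walk_add_one] at h10

end Walk

section Topology

variable [TopologicalSpace E] [IsTopologicalAddGroup E] [ContinuousSMul ℝ E] [T2Space E]
  [Finite ι] (d₀ : ι × Bool)

theorem exists_segAt_eq (hconn : IsPreconnected (⋃ i, S.seg i)) (i : ι) :
    ∃ n, S.segAt d₀ n = i := by
  suffices range (S.segAt d₀) = univ from eq_univ_iff_forall.mp this i
  refine eq_univ_of_isPreconnected_iUnion (fun i => (isCompact_segment _ _).isClosed)
    (fun i => ⟨_, S.endpt_mem_seg i true⟩) hconn ⟨_, mem_range_self 0⟩ ?_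
  rintro _ ⟨n, rfl⟩ j ⟨x, hxn, hxj⟩
  by_cases hj : j = S.segAt d₀ n
  · exact ⟨n, hj.symm⟩
  obtain ⟨b, rfl⟩ := S.mem_range_endpt_of_mem_of_ne (Ne.symm hj) hxn hxj
  rw [S.eq_partner hj hxj]
  exact S.exists_segAt_eq_partner d₀ n b

theorem iUnion_segment_vertex (hconn : IsPreconnected (⋃ i, S.seg i)) :
    ⋃ n : ℤ, segment ℝ (S.vertex d₀ n) (S.vertex d₀ (n + 1)) = ⋃ i, S.seg i := by
  simp_rw [← S.seg_segAt_succ]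
  refine Subset.antisymm (iUnion_subset fun n => subset_iUnion _ _) (iUnion_subset fun i => ?_)
  obtain ⟨n, rfl⟩ := S.exists_segAt_eq d₀ hconn i
  rw [← sub_add_cancel n 1]
  exact subset_iUnion (fun k => S.seg (S.segAt d₀ (k + 1))) (n - 1)

theorem nonempty_homeomorph_circle [Nonempty ι] (hconn : IsPreconnected (⋃ i, S.seg i)) :
    Nonempty ((⋃ i, S.seg i) ≃ₜ Circle) := by
  obtain ⟨i₀⟩ := ‹Nonempty ι›
  have hm := S.one_lt_period (i₀, true)
  obtain ⟨e⟩ := nonempty_addCircle_homeomorph_iUnion_segment hm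
    (fun _ _ => S.vertex_eq_vertex_iff _)
    (fun _ _ _ hxa hxb => S.dvd_of_mem_openSegment_vertex _ hxa hxb)
  exact ⟨(Homeomorph.setCongr (S.iUnion_segment_vertex _ hconn)).symm.trans
    (e.symm.trans (AddCircle.homeomorphCircle (by positivity)))⟩

end Topology

end PolygonalLoops

def circleHomeomorphSphere : Circle ≃ₜ Metric.sphere (0 : EuclideanSpace ℝ (Fin 2)) 1 :=
  Complex.orthonormalBasisOneI.repr.toHomeomorph.subtype fun z => by
    simp [Submonoid.unitSphere]

theorem pos_iff_of_mem_openSegment {a c y : ℝ} (ha : 0 ≤ a) (hc : 0 ≤ c)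
    (hy : y ∈ openSegment ℝ a c) : 0 < y ↔ 0 < a ∨ 0 < c := by
  obtain ⟨s, t, hs, ht, -, rfl⟩ := hy
  rw [smul_eq_mul, smul_eq_mul]
  constructor
  · intro h
    by_contra! h'
    nlinarith [h'.1, h'.2]
  · rintro (h | h) <;> positivity

namespace AffineBasis

variable {ι E : Type*} [Fintype ι] [AddCommGroup E] [Module ℝ E] (b : AffineBasis ι ℝ E)

def posSupport (x : E) : Finset ι := {i | 0 < b.coord i x}

theorem mem_posSupport {x : E} {i : ι} : i ∈ b.posSupport x ↔ 0 < b.coord i x := by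
  simp [posSupport]

theorem posSupport_subset_of_mem_convexHull {s : Set ι} {x : E}
    (hx : x ∈ convexHull ℝ (b '' s)) :
    ↑(b.posSupport x) ⊆ s := by
  intro i hi
  by_contra his
  have hzero : convexHull ℝ (b '' s) ⊆ b.coord i ⁻¹' {0} :=
    convexHull_min
      (image_subset_iff.mpr fun j hj => b.coord_apply_ne (ne_of_mem_of_not_mem hj his).symm)
      ((convex_singleton 0).affine_preimage (b.coord i))
  exact (b.mem_posSupport.mp hi).ne' (hzero hx)

variable [DecidableEq ι]

theorem posSupport_apply (j : ι) : b.posSupport (b j) = {j} := by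
  ext i
  by_cases h : i = j <;> simp [mem_posSupport, h]

theorem posSupport_of_mem_openSegment {x y z : E} (hx : x ∈ convexHull ℝ (range b))
    (hy : y ∈ convexHull ℝ (range b)) (hz : z ∈ openSegment ℝ x y) :
    b.posSupport z = b.posSupport x ∪ b.posSupport y := by
  rw [b.convexHull_eq_nonneg_coord] at hx hy
  ext i
  rw [Finset.mem_union, mem_posSupport, mem_posSupport, mem_posSupport]
  exact pos_iff_of_mem_openSegment (hx i) (hy i)
    (image_openSegment ℝ (b.coord i) x y ▸ mem_image_of_mem _ hz)

theorem posSupport_of_mem_openSegment_apply {j k : ι} {z : E}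
    (hz : z ∈ openSegment ℝ (b j) (b k)) :
    b.posSupport z = {j, k} := by
  rw [b.posSupport_of_mem_openSegment (subset_convexHull ℝ _ (mem_range_self j))
    (subset_convexHull ℝ _ (mem_range_self k)) hz, posSupport_apply, posSupport_apply]
  rfl

end AffineBasis

theorem Fin4.exists_forall_ne_iff_eq : ∀ a c i : Fin 4, a ≠ c → a ≠ i → c ≠ i →
    ∃ n, ∀ n', n' ≠ i ∧ a ≠ n' ∧ c ≠ n' ↔ n' = n := by
  decide

set_option synthInstance.maxSize 1000 in
theorem Fin4.union_pair_eq_compl : ∀ i j k l m : Fin 4, j ≠ k → l ≠ m → j ≠ i → k ≠ i →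
    l ≠ i → m ≠ i → ({j, k} : Finset (Fin 4)) ≠ {l, m} →
    ({j, k} ∪ {l, m} : Finset (Fin 4)) = {i}ᶜ := by
  decide

def tetBasis {v : Fin 4 → E3} (hv : AffineIndependent ℝ v) : AffineBasis (Fin 4) ℝ E3 :=
  ⟨v, hv, hv.affineSpan_eq_top_iff_card_eq_finrank_add_one.mpr (by simp)⟩

section Tetrahedron

variable {v : Fin 4 → E3}

theorem segment_subset_tetFace {j k i : Fin 4} (hj : j ≠ i) (hk : k ≠ i) :
    segment ℝ (v j) (v k) ⊆ TetFace v i :=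
  (convex_convexHull ℝ _).segment_subset (subset_convexHull ℝ _ ⟨j, hj, rfl⟩)
    (subset_convexHull ℝ _ ⟨k, hk, rfl⟩)

theorem notMem_posSupport_of_mem_tetFace (hv : AffineIndependent ℝ v) {i : Fin 4} {x : E3}
    (hx : x ∈ TetFace v i) : i ∉ (tetBasis hv).posSupport x := fun hi =>
  (tetBasis hv).posSupport_subset_of_mem_convexHull hx hi rfl

theorem mem_tetFace_iff_of_mem_openSegment_vertices (hv : AffineIndependent ℝ v) {a c i : Fin 4}
    {z : E3}
    (hz : z ∈ openSegment ℝ (v a) (v c)) : z ∈ TetFace v i ↔ a ≠ i ∧ c ≠ i := by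
  refine ⟨fun hzi => ?_,
    fun h => segment_subset_tetFace h.1 h.2 (openSegment_subset_segment ℝ _ _ hz)⟩
  have hi := notMem_posSupport_of_mem_tetFace hv hzi
  rw [(tetBasis hv).posSupport_of_mem_openSegment_apply hz] at hi
  simp only [Finset.mem_insert, Finset.mem_singleton, not_or] at hi
  exact ⟨Ne.symm hi.1, Ne.symm hi.2⟩

namespace JoinsDistinctEdges

variable {i : Fin 4} {p : E3 × E3}

theorem segment_subset_tetFace (h : JoinsDistinctEdges v i p) :
    segment ℝ p.1 p.2 ⊆ TetFace v i := by
  obtain ⟨j, k, l, m, hj, hk, hl, hm, -, -, -, h1, h2⟩ := h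
  exact (convex_convexHull ℝ _).segment_subset
    (_root_.segment_subset_tetFace hj hk (openSegment_subset_segment ℝ _ _ h1))
    (_root_.segment_subset_tetFace hl hm (openSegment_subset_segment ℝ _ _ h2))

theorem posSupport_of_mem_openSegment (hv : AffineIndependent ℝ v) (h : JoinsDistinctEdges v i p)
    {x : E3} (hx : x ∈ openSegment ℝ p.1 p.2) : (tetBasis hv).posSupport x = {i}ᶜ := by
  obtain ⟨j, k, l, m, hj, hk, hl, hm, hjk, hlm, hne, h1, h2⟩ := h
  have hull {a c : Fin 4} {y : E3} (hy : y ∈ openSegment ℝ (v a) (v c)) :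
      y ∈ convexHull ℝ (range (tetBasis hv)) :=
    segment_subset_convexHull (mem_range_self a) (mem_range_self c)
      (openSegment_subset_segment ℝ _ _ hy)
  rw [(tetBasis hv).posSupport_of_mem_openSegment (hull h1) (hull h2) hx,
    (tetBasis hv).posSupport_of_mem_openSegment_apply h1,
    (tetBasis hv).posSupport_of_mem_openSegment_apply h2]
  exact Fin4.union_pair_eq_compl i j k l m hjk hlm hj hk hl hm hne

theorem fst_ne_snd (hv : AffineIndependent ℝ v) (h : JoinsDistinctEdges v i p) : p.1 ≠ p.2 := by
  obtain ⟨j, k, l, m, -, -, -, -, -, -, hne, h1, h2⟩ := h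
  intro h12
  rw [h12] at h1
  rw [← (tetBasis hv).posSupport_of_mem_openSegment_apply h1,
    ← (tetBasis hv).posSupport_of_mem_openSegment_apply h2] at hne
  exact hne rfl

theorem mem_tetFace_iff_of_mem_openSegment (hv : AffineIndependent ℝ v)
    (h : JoinsDistinctEdges v i p)
    {x : E3} (hx : x ∈ openSegment ℝ p.1 p.2) {i' : Fin 4} : x ∈ TetFace v i' ↔ i' = i := by
  refine ⟨fun hxi => ?_,
    fun hi => hi ▸ h.segment_subset_tetFace (openSegment_subset_segment ℝ _ _ hx)⟩
  simpa [h.posSupport_of_mem_openSegment hv hx] using notMem_posSupport_of_mem_tetFace hv hxi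

theorem existsUnique_tetFace (hv : AffineIndependent ℝ v) (h : JoinsDistinctEdges v i p)
    (b : Bool) :
    ∃! i', i' ≠ i ∧ (bif b then p.2 else p.1) ∈ TetFace v i' := by
  have hend : ∃ a c, a ≠ c ∧ a ≠ i ∧ c ≠ i ∧
      (bif b then p.2 else p.1) ∈ openSegment ℝ (v a) (v c) := by
    obtain ⟨j, k, l, m, hj, hk, hl, hm, hjk, hlm, -, h1, h2⟩ := h
    cases b
    exacts [⟨j, k, hjk, hj, hk, h1⟩, ⟨l, m, hlm, hl, hm, h2⟩]
  obtain ⟨a, c, hac, hai, hci, hz⟩ := hend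
  obtain ⟨n, hn⟩ := Fin4.exists_forall_ne_iff_eq a c i hac hai hci
  simp_rw [mem_tetFace_iff_of_mem_openSegment_vertices hv hz, hn]
  exact existsUnique_eq

end JoinsDistinctEdges

end Tetrahedron

namespace TetPattern

variable {v : Fin 4 → E3} {P : Set E3} {L : Fin 4 → Finset (E3 × E3)}

theorem eq_of_fst_eq_of_mem_segment
    (hdisj : ∀ i, ∀ p ∈ L i, ∀ q ∈ L i, p ≠ q →
      Disjoint (segment ℝ p.1 p.2) (segment ℝ q.1 q.2))
    {o o' : Σ i, L i} (h : o.1 = o'.1) {x : E3} (hx : x ∈ segment ℝ o.2.1.1 o.2.1.2)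
    (hx' : x ∈ segment ℝ o'.2.1.1 o'.2.1.2) : o = o' := by
  obtain ⟨i, p, hp⟩ := o
  obtain ⟨i', q, hq⟩ := o'
  obtain rfl : i = i' := h
  by_contra hne
  have hpq : p ≠ q := fun hpq => hne (by subst hpq; rfl)
  exact disjoint_left.mp (hdisj i p hp q hq hpq) hx hx'

theorem segment_subset (hface : ∀ i, P ∩ TetFace v i = ⋃ p ∈ L i, segment ℝ p.1 p.2)
    {i : Fin 4} {p : E3 × E3} (hp : p ∈ L i) : segment ℝ p.1 p.2 ⊆ P := by
  have hsub : segment ℝ p.1 p.2 ⊆ P ∩ TetFace v i :=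
    hface i ▸ subset_biUnion_of_mem (u := fun p : E3 × E3 => segment ℝ p.1 p.2) hp
  exact hsub.trans inter_subset_left

def loops (hv : AffineIndependent ℝ v)
    (hface : ∀ i, P ∩ TetFace v i = ⋃ p ∈ L i, segment ℝ p.1 p.2)
    (hjoin : ∀ i, ∀ p ∈ L i, JoinsDistinctEdges v i p)
    (hdisj : ∀ i, ∀ p ∈ L i, ∀ q ∈ L i, p ≠ q →
      Disjoint (segment ℝ p.1 p.2) (segment ℝ q.1 q.2)) :
    PolygonalLoops (Σ i, L i) E3 where
  endpt o b := bif b then o.2.1.2 else o.2.1.1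
  endpt_false_ne_true o := (hjoin o.1 o.2.1 o.2.2).fst_ne_snd hv
  mem_range_endpt_of_mem_of_ne {o o' x} hne hx hx' := by
    have hface_ne : o'.1 ≠ o.1 := fun h => hne (eq_of_fst_eq_of_mem_segment hdisj h.symm hx hx')
    rw [← insert_endpoints_openSegment] at hx
    rcases hx with rfl | rfl | hx
    · exact ⟨false, rfl⟩
    · exact ⟨true, rfl⟩
    · exact absurd ((hjoin o'.1 _ o'.2.2).segment_subset_tetFace hx')
        (mt ((hjoin o.1 _ o.2.2).mem_tetFace_iff_of_mem_openSegment hv hx).mp hface_ne)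
  existsUnique_partner o b := by
    obtain ⟨i', ⟨hi', hzi'⟩, huniq⟩ := (hjoin o.1 _ o.2.2).existsUnique_tetFace hv b
    have hzo : (bif b then o.2.1.2 else o.2.1.1) ∈ segment ℝ o.2.1.1 o.2.1.2 := by
      cases b
      exacts [left_mem_segment ℝ _ _, right_mem_segment ℝ _ _]
    have hz : _ ∈ P ∩ TetFace v i' := ⟨segment_subset hface o.2.2 hzo, hzi'⟩
    rw [hface i', mem_iUnion₂] at hz
    obtain ⟨q, hq, hzq⟩ := hz
    refine ⟨⟨i', q, hq⟩, ⟨fun h => hi' (congrArg Sigma.fst h), hzq⟩, ?_⟩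
    rintro o'' ⟨hne, hzo''⟩
    have hface_ne : o''.1 ≠ o.1 := fun h => hne (eq_of_fst_eq_of_mem_segment hdisj h hzo'' hzo)
    have hface_eq : o''.1 = i' :=
      huniq _ ⟨hface_ne, (hjoin o''.1 _ o''.2.2).segment_subset_tetFace hzo''⟩
    exact eq_of_fst_eq_of_mem_segment hdisj hface_eq hzo'' hzq

theorem iUnion_seg_loops (hv : AffineIndependent ℝ v) (hsub : P ⊆ Tet v)
    (hface : ∀ i, P ∩ TetFace v i = ⋃ p ∈ L i, segment ℝ p.1 p.2)
    (hjoin : ∀ i, ∀ p ∈ L i, JoinsDistinctEdges v i p)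
    (hdisj : ∀ i, ∀ p ∈ L i, ∀ q ∈ L i, p ≠ q →
      Disjoint (segment ℝ p.1 p.2) (segment ℝ q.1 q.2)) :
    ⋃ o, (loops hv hface hjoin hdisj).seg o = P := by
  refine Subset.antisymm (iUnion_subset fun o => segment_subset hface o.2.2) fun x hx => ?_
  obtain ⟨i, hxi⟩ := mem_iUnion.mp (hsub hx)
  have hx' : x ∈ P ∩ TetFace v i := ⟨hx, hxi⟩
  rw [hface i, mem_iUnion₂] at hx'
  obtain ⟨p, hp, hxp⟩ := hx'
  exact mem_iUnion.mpr ⟨⟨i, p, hp⟩, hxp⟩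

end TetPattern

/-- Every track in the boundary tetrahedron `T`, with the subspace topology from `ℝ³`,
is homeomorphic to the circle `S¹`, the unit sphere in `EuclideanSpace ℝ (Fin 2)`. -/
theorem track_homeomorphic_circle
    (v : Fin 4 → E3) (hv : AffineIndependent ℝ v)
    (P : Set E3) (hP : IsTrack v P) :
    Nonempty (P ≃ₜ Metric.sphere (0 : EuclideanSpace ℝ (Fin 2)) 1) := by
  obtain ⟨⟨hsub, hfaces, -⟩, hne, hconn⟩ := hP
  choose L hface hjoin hdisj using hfaces
  set S := TetPattern.loops hv hface hjoin hdisj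
  have hP : ⋃ o, S.seg o = P := TetPattern.iUnion_seg_loops hv hsub hface hjoin hdisj
  have : Nonempty (Σ i, L i) := by
    rw [← hP] at hne
    obtain ⟨o, -⟩ := nonempty_iUnion.mp hne
    exact ⟨o⟩
  obtain ⟨e⟩ := S.nonempty_homeomorph_circle (hP ▸ hconn)
  exact ⟨(Homeomorph.setCongr hP.symm).trans (e.trans circleHomeomorphSphere)⟩
end
end

section
/- If a track in the boundary tetrahedron T meets every edge of T in at most one point, then its weight is 3 or 4; that is, a track intersecting each edge at most once is a 3-track or a 4-track. -/
open Set

noncomputable section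

/-- Uniqueness of affine coefficients for affinely independent families. -/
lemma affine_coeffs {v : Fin 4 → E3} (hv : AffineIndependent ℝ v) (f g : Fin 4 → ℝ)
    (hsum : ∑ q, f q = ∑ q, g q) (hvec : ∑ q, f q • v q = ∑ q, g q • v q) :
    ∀ q, f q = g q := by
  have key := affineIndependent_iff.mp hv Finset.univ (f - g)
    (by simp [Pi.sub_apply, Finset.sum_sub_distrib, hsum])
    (by simp [Pi.sub_apply, sub_smul, Finset.sum_sub_distrib, hvec])
  intro q
  have := key q (Finset.mem_univ q)
  simpa [sub_eq_zero] using this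

lemma pair_eq_fin {j k l m : Fin 4} (h : ({j, k} : Finset (Fin 4)) = {l, m}) :
    (j = l ∧ k = m) ∨ (j = m ∧ k = l) := by
  have h' : ({j, k} : Set (Fin 4)) = {l, m} := by
    have := congrArg (fun s : Finset (Fin 4) => (s : Set (Fin 4))) h
    simpa using this
  exact Set.pair_eq_pair_iff.mp h'

lemma openSeg_eq_pair {v : Fin 4 → E3} {j k l m : Fin 4}
    (h : ({j, k} : Finset (Fin 4)) = {l, m}) :
    openSegment ℝ (v j) (v k) = openSegment ℝ (v l) (v m) := by
  rcases pair_eq_fin h with ⟨h1, h2⟩ | ⟨h1, h2⟩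
  · rw [h1, h2]
  · rw [h1, h2, openSegment_symm]

lemma pair_cases {j k a b c : Fin 4} (hj : j = a ∨ j = b ∨ j = c)
    (hk : k = a ∨ k = b ∨ k = c) (hjk : j ≠ k) :
    ({j, k} : Finset (Fin 4)) = {a, b} ∨ ({j, k} : Finset (Fin 4)) = {a, c} ∨
      ({j, k} : Finset (Fin 4)) = {b, c} := by
  rcases hj with rfl | rfl | rfl <;> rcases hk with rfl | rfl | rfl <;>
    simp_all [Finset.pair_comm]

lemma pigeon {α : Type*} {A B C u u' w w' : α}
    (h1 : u = A ∨ u = B ∨ u = C) (h2 : u' = A ∨ u' = B ∨ u' = C)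
    (h3 : w = A ∨ w = B ∨ w = C) (h4 : w' = A ∨ w' = B ∨ w' = C)
    (h5 : u ≠ u') (h6 : w ≠ w') :
    u = w ∨ u = w' ∨ u' = w ∨ u' = w' := by
  rcases h1 with rfl | rfl | rfl <;> rcases h2 with rfl | rfl | rfl <;>
    rcases h3 with rfl | rfl | rfl <;> rcases h4 with rfl | rfl | rfl <;> tauto

/-- Open segments of distinct edges are disjoint. -/
lemma openSeg_disjoint {v : Fin 4 → E3} (hv : AffineIndependent ℝ v) {a b c d : Fin 4}
    (hab : a ≠ b) (hcd : c ≠ d) (hne : ({a, b} : Finset (Fin 4)) ≠ {c, d}) :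
    Disjoint (openSegment ℝ (v a) (v b)) (openSegment ℝ (v c) (v d)) := by
  rw [Set.disjoint_left]
  rintro x hx hx'
  obtain ⟨s1, s2, hs1, hs2, hs, hxv⟩ := hx
  obtain ⟨t1, t2, ht1, ht2, ht, hxv'⟩ := hx'
  have key := affine_coeffs hv
    (fun q => (if q = a then s1 else 0) + (if q = b then s2 else 0))
    (fun q => (if q = c then t1 else 0) + (if q = d then t2 else 0))
    (by simp [Finset.sum_add_distrib, Finset.sum_ite_eq', hs, ht])
    (by
      simp only [add_smul, ite_smul, zero_smul, Finset.sum_add_distrib,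
        Finset.sum_ite_eq', Finset.mem_univ, if_true]
      rw [hxv, hxv'])
  -- some element of {a,b} is not in {c,d} or vice versa
  have hsub : ¬(({a, b} : Finset (Fin 4)) ⊆ {c, d}) ∨ ¬(({c, d} : Finset (Fin 4)) ⊆ {a, b}) := by
    by_contra hcon
    push_neg at hcon
    exact hne (Finset.Subset.antisymm hcon.1 hcon.2)
  rcases hsub with hsub | hsub
  · obtain ⟨q, hq1, hq2⟩ := Finset.not_subset.mp hsub
    have hq := key q
    beta_reduce at hq
    simp only [Finset.mem_insert, Finset.mem_singleton] at hq1 hq2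
    push_neg at hq2
    rcases hq1 with rfl | rfl
    · rw [if_pos rfl, if_neg hab, if_neg hq2.1, if_neg hq2.2] at hq; linarith
    · rw [if_neg (Ne.symm hab), if_pos rfl, if_neg hq2.1, if_neg hq2.2] at hq; linarith
  · obtain ⟨q, hq1, hq2⟩ := Finset.not_subset.mp hsub
    have hq := key q
    beta_reduce at hq
    simp only [Finset.mem_insert, Finset.mem_singleton] at hq1 hq2
    push_neg at hq2
    rcases hq1 with rfl | rfl
    · rw [if_neg hq2.1, if_neg hq2.2, if_pos rfl, if_neg hcd] at hq; linarith
    · rw [if_neg hq2.1, if_neg hq2.2, if_neg (Ne.symm hcd), if_pos rfl] at hq; linarith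

/-- A segment joining interior points of two edges sharing vertex `a`
does not meet the open third edge. -/
lemma segment_avoids_third {v : Fin 4 → E3} (hv : AffineIndependent ℝ v) {a b c : Fin 4}
    (hab : a ≠ b) (hac : a ≠ c) (hbc : b ≠ c) {x y z : E3}
    (hx : x ∈ openSegment ℝ (v a) (v b)) (hy : y ∈ openSegment ℝ (v a) (v c))
    (hz : z ∈ segment ℝ x y) : z ∉ openSegment ℝ (v b) (v c) := by
  intro hz'
  obtain ⟨s1, s2, hs1, hs2, hs, hxv⟩ := hx
  obtain ⟨t1, t2, ht1, ht2, ht, hyv⟩ := hy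
  obtain ⟨u1, u2, hu1, hu2, hu, hzv⟩ := hz
  obtain ⟨r1, r2, hr1, hr2, hr, hzv'⟩ := hz'
  have key := affine_coeffs hv
    (fun q => (if q = a then u1 * s1 + u2 * t1 else 0) + (if q = b then u1 * s2 else 0)
      + (if q = c then u2 * t2 else 0))
    (fun q => (if q = b then r1 else 0) + (if q = c then r2 else 0))
    (by
      simp only [Finset.sum_add_distrib, Finset.sum_ite_eq', Finset.mem_univ, if_true]
      nlinarith [hs, ht, hu, hr])
    (by
      simp only [add_smul, ite_smul, zero_smul, Finset.sum_add_distrib,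
        Finset.sum_ite_eq', Finset.mem_univ, if_true]
      rw [hzv']
      rw [← hzv, ← hxv, ← hyv]
      module)
  have hA := key a
  beta_reduce at hA
  rw [if_pos rfl, if_neg hab, if_neg hac, if_neg hab, if_neg hac] at hA
  simp only [add_zero] at hA
  -- hA : u1 * s1 + u2 * t1 = 0, but this must be positive
  rcases eq_or_lt_of_le hu1 with h0 | h0
  · have : u2 = 1 := by linarith
    nlinarith
  · nlinarith

lemma seg_subset_face {v : Fin 4 → E3} {x y i : Fin 4} (hxi : x ≠ i) (hyi : y ≠ i) :
    segment ℝ (v x) (v y) ⊆ TetFace v i := by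
  rw [← convexHull_pair]
  apply convexHull_mono
  rintro w (rfl | rfl)
  · exact ⟨x, hxi, rfl⟩
  · exact ⟨y, hyi, rfl⟩

lemma face_sum {v : Fin 4 → E3} (hv : AffineIndependent ℝ v) {P : Set E3}
    (hPat : IsPattern v P)
    (h1 : ∀ i j : Fin 4, i ≠ j → (P ∩ segment ℝ (v i) (v j)).ncard ≤ 1)
    (i a b c : Fin 4) (hab : a ≠ b) (hac : a ≠ c) (hbc : b ≠ c)
    (hai : a ≠ i) (hbi : b ≠ i) (hci : c ≠ i)
    (hcov : ∀ x : Fin 4, x = a ∨ x = b ∨ x = c ∨ x = i) :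
    (P ∩ segment ℝ (v a) (v b)).ncard + (P ∩ segment ℝ (v a) (v c)).ncard
      + (P ∩ segment ℝ (v b) (v c)).ncard = 0 ∨
    (P ∩ segment ℝ (v a) (v b)).ncard + (P ∩ segment ℝ (v a) (v c)).ncard
      + (P ∩ segment ℝ (v b) (v c)).ncard = 2 := by
  obtain ⟨L, hLU, hLJ, hLD⟩ := hPat.2.1 i
  have mem3 : ∀ x : Fin 4, x ≠ i → x = a ∨ x = b ∨ x = c := by
    intro x hx; rcases hcov x with h | h | h | h <;> tauto
  have hsegP : ∀ p ∈ L, segment ℝ p.1 p.2 ⊆ P := by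
    intro p hp x hx
    have : x ∈ P ∩ TetFace v i := by
      rw [hLU]; exact Set.mem_biUnion hp hx
    exact this.1
  have hedge1 : ∀ (x y : Fin 4) (w : E3), x ≠ y → w ∈ P →
      w ∈ openSegment ℝ (v x) (v y) → (P ∩ segment ℝ (v x) (v y)).ncard = 1 := by
    intro x y w hxy hwP hw
    have hfin := (hPat.2.2 x y hxy).1
    have hne : (P ∩ segment ℝ (v x) (v y)).Nonempty :=
      ⟨w, hwP, openSegment_subset_segment ℝ _ _ hw⟩
    have h2 := h1 x y hxy
    have h3 := (Set.ncard_pos hfin).mpr hne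
    omega
  have hcard : ∀ p ∈ L, ∀ q ∈ L, p = q := by
    intro p hp q hq
    by_contra hpq
    obtain ⟨j, k, l, m, hji, hki, hli, hmi, hjk, hlm, hnejk, hp1, hp2⟩ := hLJ p hp
    obtain ⟨j', k', l', m', hji', hki', hli', hmi', hjk', hlm', hnejk', hq1, hq2⟩ := hLJ q hq
    have E1 := pair_cases (mem3 j hji) (mem3 k hki) hjk
    have E2 := pair_cases (mem3 l hli) (mem3 m hmi) hlm
    have E1' := pair_cases (mem3 j' hji') (mem3 k' hki') hjk'
    have E2' := pair_cases (mem3 l' hli') (mem3 m' hmi') hlm'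
    have hdisj := hLD p hp q hq hpq
    have hP1 : p.1 ∈ P := hsegP p hp (left_mem_segment ℝ _ _)
    have hP2 : p.2 ∈ P := hsegP p hp (right_mem_segment ℝ _ _)
    have hQ1 : q.1 ∈ P := hsegP q hq (left_mem_segment ℝ _ _)
    have hQ2 : q.2 ∈ P := hsegP q hq (right_mem_segment ℝ _ _)
    have final : ∀ (x y : E3) (s t : Fin 4), s ≠ t → x ∈ P → y ∈ P → x ≠ y →
        x ∈ openSegment ℝ (v s) (v t) → y ∈ openSegment ℝ (v s) (v t) → False := by
      intro x y s t hst hxP hyP hxy hx hy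
      have hfin := (hPat.2.2 s t hst).1
      have h2 : 1 < (P ∩ segment ℝ (v s) (v t)).ncard :=
        (Set.one_lt_ncard_iff hfin).mpr
          ⟨x, y, ⟨hxP, openSegment_subset_segment ℝ _ _ hx⟩,
            ⟨hyP, openSegment_subset_segment ℝ _ _ hy⟩, hxy⟩
      have := h1 s t hst; omega
    have hne11 : p.1 ≠ q.1 := fun h =>
      Set.disjoint_left.mp hdisj (left_mem_segment ℝ _ _) (h ▸ left_mem_segment ℝ q.1 q.2)
    have hne12 : p.1 ≠ q.2 := fun h =>
      Set.disjoint_left.mp hdisj (left_mem_segment ℝ _ _) (h ▸ right_mem_segment ℝ q.1 q.2)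
    have hne21 : p.2 ≠ q.1 := fun h =>
      Set.disjoint_left.mp hdisj (right_mem_segment ℝ _ _) (h ▸ left_mem_segment ℝ q.1 q.2)
    have hne22 : p.2 ≠ q.2 := fun h =>
      Set.disjoint_left.mp hdisj (right_mem_segment ℝ _ _) (h ▸ right_mem_segment ℝ q.1 q.2)
    rcases pigeon E1 E2 E1' E2' hnejk hnejk' with h | h | h | h
    · exact final p.1 q.1 j k hjk hP1 hQ1 hne11 hp1 (openSeg_eq_pair h ▸ hq1)
    · exact final p.1 q.2 j k hjk hP1 hQ2 hne12 hp1 (openSeg_eq_pair h ▸ hq2)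
    · exact final p.2 q.1 l m hlm hP2 hQ1 hne21 hp2 (openSeg_eq_pair h ▸ hq1)
    · exact final p.2 q.2 l m hlm hP2 hQ2 hne22 hp2 (openSeg_eq_pair h ▸ hq2)
  rcases L.eq_empty_or_nonempty with hL | ⟨p, hp⟩
  · left
    subst hL
    have hPF : P ∩ TetFace v i = ∅ := by rw [hLU]; simp
    have hz : ∀ x y : Fin 4, x ≠ i → y ≠ i → x ≠ y →
        (P ∩ segment ℝ (v x) (v y)).ncard = 0 := by
      intro x y hxi hyi hxy
      have : P ∩ segment ℝ (v x) (v y) = ∅ := by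
        apply Set.eq_empty_iff_forall_notMem.mpr
        rintro z ⟨hz1, hz2⟩
        have : z ∈ P ∩ TetFace v i := ⟨hz1, seg_subset_face hxi hyi hz2⟩
        rw [hPF] at this
        exact this
      simp [this]
    rw [hz a b hai hbi hab, hz a c hai hci hac, hz b c hbi hci hbc]
  · right
    have hLp : L = {p} :=
      Finset.eq_singleton_iff_unique_mem.mpr ⟨hp, fun q hq => hcard q hq p hp⟩
    have hPF : P ∩ TetFace v i = segment ℝ p.1 p.2 := by rw [hLU, hLp]; simp
    obtain ⟨j, k, l, m, hji, hki, hli, hmi, hjk, hlm, hnejk, hp1, hp2⟩ := hLJ p hp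
    have hP1 : p.1 ∈ P := by
      have : p.1 ∈ P ∩ TetFace v i := hPF ▸ left_mem_segment ℝ p.1 p.2
      exact this.1
    have hP2 : p.2 ∈ P := by
      have : p.2 ∈ P ∩ TetFace v i := hPF ▸ right_mem_segment ℝ p.1 p.2
      exact this.1
    have hzero : ∀ x y : Fin 4, x ≠ y → x ≠ i → y ≠ i →
        (∀ w, w ∈ segment ℝ p.1 p.2 → w ∉ openSegment ℝ (v x) (v y)) →
        (P ∩ segment ℝ (v x) (v y)).ncard = 0 := by
      intro x y hxy hxi hyi hG
      have hopen := (hPat.2.2 x y hxy).2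
      have : P ∩ segment ℝ (v x) (v y) = ∅ := by
        apply Set.eq_empty_iff_forall_notMem.mpr
        rintro z ⟨hz1, hz2⟩
        have hzo : z ∈ openSegment ℝ (v x) (v y) := hopen ⟨hz1, hz2⟩
        have hzf : z ∈ segment ℝ p.1 p.2 := by
          rw [← hPF]; exact ⟨hz1, seg_subset_face hxi hyi hz2⟩
        exact hG z hzf hzo
      simp [this]
    have E1 := pair_cases (mem3 j hji) (mem3 k hki) hjk
    have E2 := pair_cases (mem3 l hli) (mem3 m hmi) hlm
    rcases E1 with h | h | h <;> rcases E2 with h' | h' | h'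
    · exact absurd (h.trans h'.symm) hnejk
    · -- {j,k}={a,b}, {l,m}={a,c}; third edge bc, shared vertex a
      have hp1' : p.1 ∈ openSegment ℝ (v a) (v b) := openSeg_eq_pair h ▸ hp1
      have hp2' : p.2 ∈ openSegment ℝ (v a) (v c) := openSeg_eq_pair h' ▸ hp2
      rw [hedge1 a b p.1 hab hP1 hp1', hedge1 a c p.2 hac hP2 hp2',
        hzero b c hbc hbi hci (fun w hw => segment_avoids_third hv hab hac hbc hp1' hp2' hw)]
    · -- {j,k}={a,b}, {l,m}={b,c}; third edge ac, shared vertex b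
      have hp1' : p.1 ∈ openSegment ℝ (v b) (v a) := by
        rw [openSegment_symm]; exact openSeg_eq_pair h ▸ hp1
      have hp2' : p.2 ∈ openSegment ℝ (v b) (v c) := openSeg_eq_pair h' ▸ hp2
      rw [hedge1 a b p.1 hab hP1 (by rwa [openSegment_symm] at hp1'),
        hedge1 b c p.2 hbc hP2 hp2',
        hzero a c hac hai hci (fun w hw =>
          segment_avoids_third hv (Ne.symm hab) hbc (fun h'' => hac h'') hp1' hp2' hw)]
    · -- {j,k}={a,c}, {l,m}={a,b}; third bc, shared a
      have hp1' : p.1 ∈ openSegment ℝ (v a) (v c) := openSeg_eq_pair h ▸ hp1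
      have hp2' : p.2 ∈ openSegment ℝ (v a) (v b) := openSeg_eq_pair h' ▸ hp2
      have hz3 : (P ∩ segment ℝ (v b) (v c)).ncard = 0 := by
        apply hzero b c hbc hbi hci
        intro w hw hw'
        exact segment_avoids_third hv hac hab (Ne.symm hbc) hp1' hp2' hw
          (by rwa [openSegment_symm] at hw')
      rw [hedge1 a c p.1 hac hP1 hp1', hedge1 a b p.2 hab hP2 hp2', hz3]
    · exact absurd (h.trans h'.symm) hnejk
    · -- {j,k}={a,c}, {l,m}={b,c}; third ab, shared c
      have hp1' : p.1 ∈ openSegment ℝ (v c) (v a) := by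
        rw [openSegment_symm]; exact openSeg_eq_pair h ▸ hp1
      have hp2' : p.2 ∈ openSegment ℝ (v c) (v b) := by
        rw [openSegment_symm]; exact openSeg_eq_pair h' ▸ hp2
      have hz3 : (P ∩ segment ℝ (v a) (v b)).ncard = 0 := by
        apply hzero a b hab hai hbi
        intro w hw hw'
        exact segment_avoids_third hv (Ne.symm hac) (Ne.symm hbc) hab hp1' hp2' hw hw'
      rw [hedge1 a c p.1 hac hP1 (by rwa [openSegment_symm] at hp1'),
        hedge1 b c p.2 hbc hP2 (by rwa [openSegment_symm] at hp2'), hz3]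
    · -- {j,k}={b,c}, {l,m}={a,b}; third ac, shared b
      have hp1' : p.1 ∈ openSegment ℝ (v b) (v c) := openSeg_eq_pair h ▸ hp1
      have hp2' : p.2 ∈ openSegment ℝ (v b) (v a) := by
        rw [openSegment_symm]; exact openSeg_eq_pair h' ▸ hp2
      have hz3 : (P ∩ segment ℝ (v a) (v c)).ncard = 0 := by
        apply hzero a c hac hai hci
        intro w hw hw'
        exact segment_avoids_third hv hbc (Ne.symm hab) (Ne.symm hac) hp1' hp2' hw
          (by rwa [openSegment_symm] at hw')
      rw [hedge1 b c p.1 hbc hP1 hp1',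
        hedge1 a b p.2 hab hP2 (by rwa [openSegment_symm] at hp2'), hz3]
    · -- {j,k}={b,c}, {l,m}={a,c}; third ab, shared c
      have hp1' : p.1 ∈ openSegment ℝ (v c) (v b) := by
        rw [openSegment_symm]; exact openSeg_eq_pair h ▸ hp1
      have hp2' : p.2 ∈ openSegment ℝ (v c) (v a) := by
        rw [openSegment_symm]; exact openSeg_eq_pair h' ▸ hp2
      have hz3 : (P ∩ segment ℝ (v a) (v b)).ncard = 0 := by
        apply hzero a b hab hai hbi
        intro w hw hw'
        exact segment_avoids_third hv (Ne.symm hbc) (Ne.symm hac) (Ne.symm hab) hp1' hp2' hw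
          (by rwa [openSegment_symm] at hw')
      rw [hedge1 b c p.1 hbc hP1 (by rwa [openSegment_symm] at hp1'),
        hedge1 a c p.2 hac hP2 (by rwa [openSegment_symm] at hp2'), hz3]
    · exact absurd (h.trans h'.symm) hnejk

/-- A track in the boundary tetrahedron `T` that meets every edge in at most one point is a
`3`-track or a `4`-track. -/
theorem track_meeting_each_edge_at_most_once
    (v : Fin 4 → E3) (hv : AffineIndependent ℝ v)
    (P : Set E3) (hP : IsTrack v P)
    (h1 : ∀ i j : Fin 4, i ≠ j → (P ∩ segment ℝ (v i) (v j)).ncard ≤ 1) :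
    trackWeight v P = 3 ∨ trackWeight v P = 4 := by
  obtain ⟨hPat, hne, _⟩ := hP
  have hfin : ∀ a b : Fin 4, a ≠ b → (P ∩ segment ℝ (v a) (v b)).Finite :=
    fun a b h => (hPat.2.2 a b h).1
  have hsub : ∀ a b : Fin 4, a ≠ b →
      P ∩ segment ℝ (v a) (v b) ⊆ openSegment ℝ (v a) (v b) :=
    fun a b h => (hPat.2.2 a b h).2
  have hdisj : ∀ a b c d : Fin 4, a ≠ b → c ≠ d →
      ({a, b} : Finset (Fin 4)) ≠ {c, d} →
      Disjoint (P ∩ segment ℝ (v a) (v b)) (P ∩ segment ℝ (v c) (v d)) := by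
    intro a b c d hab hcd hne'
    exact Set.disjoint_of_subset (hsub a b hab) (hsub c d hcd)
      (openSeg_disjoint hv hab hcd hne')
  have hEq : P ∩ TetEdges v =
      P ∩ segment ℝ (v 0) (v 1) ∪ P ∩ segment ℝ (v 0) (v 2) ∪ P ∩ segment ℝ (v 0) (v 3)
        ∪ P ∩ segment ℝ (v 1) (v 2) ∪ P ∩ segment ℝ (v 1) (v 3)
        ∪ P ∩ segment ℝ (v 2) (v 3) := by
    apply Set.Subset.antisymm
    · rintro x ⟨hxP, hxT⟩
      simp only [TetEdges, Set.mem_iUnion] at hxT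
      obtain ⟨i, j, hij, hx⟩ := hxT
      have hsymm : ∀ a b : Fin 4, segment ℝ (v a) (v b) = segment ℝ (v b) (v a) :=
        fun a b => segment_symm ℝ _ _
      simp only [Set.mem_union]
      fin_cases i <;> fin_cases j <;>
        first
          | exact absurd rfl hij
          | exact Or.inl (Or.inl (Or.inl (Or.inl (Or.inl ⟨hxP, hx⟩))))
          | exact Or.inl (Or.inl (Or.inl (Or.inl (Or.inr ⟨hxP, hx⟩))))
          | exact Or.inl (Or.inl (Or.inl (Or.inr ⟨hxP, hx⟩)))
          | exact Or.inl (Or.inl (Or.inr ⟨hxP, hx⟩))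
          | exact Or.inl (Or.inr ⟨hxP, hx⟩)
          | exact Or.inr ⟨hxP, hx⟩
          | (rw [hsymm] at hx
             first
              | exact Or.inl (Or.inl (Or.inl (Or.inl (Or.inl ⟨hxP, hx⟩))))
              | exact Or.inl (Or.inl (Or.inl (Or.inl (Or.inr ⟨hxP, hx⟩))))
              | exact Or.inl (Or.inl (Or.inl (Or.inr ⟨hxP, hx⟩)))
              | exact Or.inl (Or.inl (Or.inr ⟨hxP, hx⟩))
              | exact Or.inl (Or.inr ⟨hxP, hx⟩)
              | exact Or.inr ⟨hxP, hx⟩)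
    · have hone : ∀ a b : Fin 4, a ≠ b →
          P ∩ segment ℝ (v a) (v b) ⊆ P ∩ TetEdges v := by
        intro a b hab x hx
        refine ⟨hx.1, ?_⟩
        simp only [TetEdges, Set.mem_iUnion]
        exact ⟨a, b, hab, hx.2⟩
      rintro x (((((h | h) | h) | h) | h) | h)
      · exact hone 0 1 (by decide) h
      · exact hone 0 2 (by decide) h
      · exact hone 0 3 (by decide) h
      · exact hone 1 2 (by decide) h
      · exact hone 1 3 (by decide) h
      · exact hone 2 3 (by decide) h
  -- abbreviations for the six finite pieces
  have f01 := hfin 0 1 (by decide); have f02 := hfin 0 2 (by decide)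
  have f03 := hfin 0 3 (by decide); have f12 := hfin 1 2 (by decide)
  have f13 := hfin 1 3 (by decide); have f23 := hfin 2 3 (by decide)
  have d0102 := hdisj 0 1 0 2 (by decide) (by decide) (by decide)
  have d0103 := hdisj 0 1 0 3 (by decide) (by decide) (by decide)
  have d0112 := hdisj 0 1 1 2 (by decide) (by decide) (by decide)
  have d0113 := hdisj 0 1 1 3 (by decide) (by decide) (by decide)
  have d0123 := hdisj 0 1 2 3 (by decide) (by decide) (by decide)
  have d0203 := hdisj 0 2 0 3 (by decide) (by decide) (by decide)
  have d0212 := hdisj 0 2 1 2 (by decide) (by decide) (by decide)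
  have d0213 := hdisj 0 2 1 3 (by decide) (by decide) (by decide)
  have d0223 := hdisj 0 2 2 3 (by decide) (by decide) (by decide)
  have d0312 := hdisj 0 3 1 2 (by decide) (by decide) (by decide)
  have d0313 := hdisj 0 3 1 3 (by decide) (by decide) (by decide)
  have d0323 := hdisj 0 3 2 3 (by decide) (by decide) (by decide)
  have d1213 := hdisj 1 2 1 3 (by decide) (by decide) (by decide)
  have d1223 := hdisj 1 2 2 3 (by decide) (by decide) (by decide)
  have d1323 := hdisj 1 3 2 3 (by decide) (by decide) (by decide)
  have hW : (P ∩ TetEdges v).ncard =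
      (P ∩ segment ℝ (v 0) (v 1)).ncard + (P ∩ segment ℝ (v 0) (v 2)).ncard
        + (P ∩ segment ℝ (v 0) (v 3)).ncard + (P ∩ segment ℝ (v 1) (v 2)).ncard
        + (P ∩ segment ℝ (v 1) (v 3)).ncard + (P ∩ segment ℝ (v 2) (v 3)).ncard := by
    rw [hEq]
    rw [Set.ncard_union_eq (by
          simp only [Set.disjoint_union_left]
          exact ⟨⟨⟨⟨d0123, d0223⟩, d0323⟩, d1223⟩, d1323⟩)
        ((((f01.union f02).union f03).union f12).union f13) f23]
    rw [Set.ncard_union_eq (by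
          simp only [Set.disjoint_union_left]
          exact ⟨⟨⟨d0113, d0213⟩, d0313⟩, d1213⟩)
        (((f01.union f02).union f03).union f12) f13]
    rw [Set.ncard_union_eq (by
          simp only [Set.disjoint_union_left]
          exact ⟨⟨d0112, d0212⟩, d0312⟩)
        ((f01.union f02).union f03) f12]
    rw [Set.ncard_union_eq (by
          simp only [Set.disjoint_union_left]
          exact ⟨d0103, d0203⟩)
        (f01.union f02) f03]
    rw [Set.ncard_union_eq d0102 f01 f02]
  -- the four face relations
  have hF3 := face_sum hv hPat h1 3 0 1 2 (by decide) (by decide) (by decide)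
    (by decide) (by decide) (by decide) (by decide)
  have hF2 := face_sum hv hPat h1 2 0 1 3 (by decide) (by decide) (by decide)
    (by decide) (by decide) (by decide) (by decide)
  have hF1 := face_sum hv hPat h1 1 0 2 3 (by decide) (by decide) (by decide)
    (by decide) (by decide) (by decide) (by decide)
  have hF0 := face_sum hv hPat h1 0 1 2 3 (by decide) (by decide) (by decide)
    (by decide) (by decide) (by decide) (by decide)
  -- nonemptiness gives weight at least one
  have hWpos : 1 ≤ (P ∩ TetEdges v).ncard := by
    obtain ⟨x, hx⟩ := hne
    have hxT : x ∈ Tet v := hPat.1 hx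
    obtain ⟨i, hi⟩ := Set.mem_iUnion.mp hxT
    obtain ⟨L, hLU, hLJ, _⟩ := hPat.2.1 i
    have hxF : x ∈ ⋃ p ∈ L, segment ℝ p.1 p.2 := by rw [← hLU]; exact ⟨hx, hi⟩
    obtain ⟨p, hp, hxp⟩ := Set.mem_iUnion₂.mp hxF
    obtain ⟨j, k, l, m, hji, hki, hli, hmi, hjk, hlm, hnejk, hp1, hp2⟩ := hLJ p hp
    have hP1 : p.1 ∈ P := by
      have : p.1 ∈ P ∩ TetFace v i := by
        rw [hLU]; exact Set.mem_biUnion hp (left_mem_segment ℝ p.1 p.2)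
      exact this.1
    have hmem : p.1 ∈ P ∩ TetEdges v := by
      refine ⟨hP1, ?_⟩
      simp only [TetEdges, Set.mem_iUnion]
      exact ⟨j, k, hjk, openSegment_subset_segment ℝ _ _ hp1⟩
    have hTfin : (P ∩ TetEdges v).Finite := by
      rw [hEq]
      exact (((((f01.union f02).union f03).union f12).union f13).union f23)
    exact (Set.ncard_pos hTfin).mpr ⟨p.1, hmem⟩
  have b01 := h1 0 1 (by decide); have b02 := h1 0 2 (by decide)
  have b03 := h1 0 3 (by decide); have b12 := h1 1 2 (by decide)
  have b13 := h1 1 3 (by decide); have b23 := h1 2 3 (by decide)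
  show (P ∩ TetEdges v).ncard = 3 ∨ (P ∩ TetEdges v).ncard = 4
  rcases hF3 with hF3 | hF3 <;> rcases hF2 with hF2 | hF2 <;>
    rcases hF1 with hF1 | hF1 <;> rcases hF0 with hF0 | hF0 <;> omega
end
end
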